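/- Let P(t) = (∑_{i=0}^{n} ω_i p_i B_i^n(t)) / (∑_{i=0}^{n} ω_i B_i^n(t)) be a rational Bézier curve of degree n ≥ 2 with control points p_0, …, p_n ∈ ℝ^d and strictly positive weights ω_0, …, ω_n with ω_0 = ω_n = 1, and let Q(t) = ∑_{i=0}^{m} q_i B_i^m(t) be a Bézier curve of degree m ≥ 2. If q_m = p_n, q_{m−1} = (1 − (n/m) ω_{n−1}) p_n + (n/m) ω_{n−1} p_{n−1}, and q_{m−2} = (1/(m(m−1))) { [2 n ω_{n−1} (n ω_{n−1} − m) + n ω_{n−2} (1 − n) + m(m−1)] p_n + 2 n ω_{n−1} (m − n ω_{n−1}) p_{n−1} + n(n−1) ω_{n−2} p_{n−2} }, then Q(1) = P(1), Q′(1) = P′(1), and Q″(1) = P″(1). -/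

import Mathlib

/-!
A Bézier curve takes its last control point at `t = 1`, and its derivative (the hodograph) is the
Bézier curve of one degree less on the control points `(n + 1) (v (i + 1) - v i)`. Hence the value
and the first two derivatives at `1` of a Bézier curve only see its last three control points.
The rational curve is `P = w⁻¹ • N` for the Bézier curves `w` with coefficients `ω i` and `N` with
control points `ω i • p i`; differentiating `N = w • P` twice expresses `P'(1)` and `P''(1)` through
these end data, and with `w 1 = 1` the prescribed `q`'s match them by a scalar identity.
-/

/-- The Bernstein polynomial `B_i^n(t) = C(n,i) t^i (1-t)^(n-i)`. -/
noncomputable def bern (n i : ℕ) (t : ℝ) : ℝ :=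
  (n.choose i : ℝ) * t ^ i * (1 - t) ^ (n - i)

open Finset Polynomial

variable {F : Type*} [NormedAddCommGroup F] [NormedSpace ℝ F]

noncomputable def bezier (n : ℕ) (v : ℕ → F) (t : ℝ) : F :=
  ∑ i ∈ range (n + 1), bern n i t • v i

theorem bern_eq_eval (n i : ℕ) (t : ℝ) : bern n i t = (bernsteinPolynomial ℝ n i).eval t := by
  simp [bern, bernsteinPolynomial]

theorem bezier_one (n : ℕ) (v : ℕ → F) : bezier n v 1 = v n := by
  simp [bezier, bern_eq_eval, bernsteinPolynomial.eval_at_1]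

theorem contDiff_bezier (n : ℕ) (v : ℕ → F) {k : WithTop ℕ∞} : ContDiff ℝ k (bezier n v) := by
  unfold bezier bern
  fun_prop

theorem hasDerivAt_bezier_succ (n : ℕ) (v : ℕ → F) (t : ℝ) :
    HasDerivAt (bezier (n + 1) v) (bezier n (fun i => ((n : ℝ) + 1) • (v (i + 1) - v i)) t) t := by
  have h : HasDerivAt (bezier (n + 1) v)
      (∑ i ∈ range (n + 2), (derivative (bernsteinPolynomial ℝ (n + 1) i)).eval t • v i) t := by
    unfold bezier
    simp only [bern_eq_eval]
    exact HasDerivAt.fun_sum fun i _ =>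
      ((bernsteinPolynomial ℝ (n + 1) i).hasDerivAt t).smul_const (v i)
  refine h.congr_deriv ?_
  have hshift : ∑ i ∈ range (n + 1), bern n (i + 1) t • v (i + 1) + bern n 0 t • v 0 =
      ∑ i ∈ range (n + 1), bern n i t • v i := by
    have hB : bern n (n + 1) t = 0 := by simp [bern_eq_eval, bernsteinPolynomial.eq_zero_of_lt]
    rw [← sum_range_succ' (fun i => bern n i t • v i), sum_range_succ, hB, zero_smul, add_zero]
  calc ∑ i ∈ range (n + 2), (derivative (bernsteinPolynomial ℝ (n + 1) i)).eval t • v i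
      = ((n : ℝ) + 1) • (∑ i ∈ range (n + 1), bern n i t • v (i + 1) -
          (∑ i ∈ range (n + 1), bern n (i + 1) t • v (i + 1) + bern n 0 t • v 0)) := by
        rw [sum_range_succ']
        simp only [bernsteinPolynomial.derivative_succ, bernsteinPolynomial.derivative_zero,
          eval_mul, eval_sub, eval_neg, eval_natCast, ← bern_eq_eval, add_tsub_cancel_right]
        simp only [mul_sub, sub_smul, mul_smul, sum_sub_distrib, ← smul_sum]
        module
    _ = ((n : ℝ) + 1) • (∑ i ∈ range (n + 1), bern n i t • v (i + 1) -
          ∑ i ∈ range (n + 1), bern n i t • v i) := by rw [hshift]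
    _ = bezier n (fun i => ((n : ℝ) + 1) • (v (i + 1) - v i)) t := by
        simp only [bezier, smul_sum, ← sum_sub_distrib, smul_sub, smul_comm ((n : ℝ) + 1)]

theorem deriv_bezier_succ (n : ℕ) (v : ℕ → F) :
    deriv (bezier (n + 1) v) = bezier n (fun i => ((n : ℝ) + 1) • (v (i + 1) - v i)) :=
  funext fun t => (hasDerivAt_bezier_succ n v t).deriv

theorem deriv_bezier_one {n : ℕ} (hn : 1 ≤ n) (v : ℕ → F) :
    deriv (bezier n v) 1 = (n : ℝ) • (v n - v (n - 1)) := by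
  obtain ⟨k, rfl⟩ : ∃ k, n = k + 1 := ⟨n - 1, by omega⟩
  rw [deriv_bezier_succ, bezier_one]
  simp

theorem deriv_deriv_bezier_one {n : ℕ} (hn : 2 ≤ n) (v : ℕ → F) :
    deriv (deriv (bezier n v)) 1 = ((n : ℝ) * (n - 1)) • (v n - (2 : ℝ) • v (n - 1) + v (n - 2)) := by
  obtain ⟨k, rfl⟩ : ∃ k, n = k + 1 + 1 := ⟨n - 2, by omega⟩
  rw [deriv_bezier_succ, deriv_bezier_succ, bezier_one]
  simp only [Nat.add_sub_cancel, show k + 1 + 1 - 2 = k by omega, Nat.cast_add, Nat.cast_one]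
  module

section Quotient

variable {w : ℝ → ℝ} {N : ℝ → F} {w' : ℝ} {N' : F} {x : ℝ}

theorem hasDerivAt_inv_smul (hw : HasDerivAt w w' x) (hN : HasDerivAt N N' x) (hx : w x ≠ 0) :
    HasDerivAt (fun t => (w t)⁻¹ • N t) ((w x)⁻¹ • (N' - w' • (w x)⁻¹ • N x)) x := by
  refine ((hw.inv hx).smul hN).congr_deriv ?_
  match_scalars
  · simp
  · field_simp

theorem deriv_inv_smul (hw : DifferentiableAt ℝ w x) (hN : DifferentiableAt ℝ N x)
    (hx : w x ≠ 0) :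
    deriv (fun t => (w t)⁻¹ • N t) x = (w x)⁻¹ • (deriv N x - deriv w x • (w x)⁻¹ • N x) :=
  (hasDerivAt_inv_smul hw.hasDerivAt hN.hasDerivAt hx).deriv

theorem deriv_deriv_inv_smul (hw : ContDiff ℝ 2 w) (hN : ContDiff ℝ 2 N) (hx : w x ≠ 0) :
    deriv (deriv fun t => (w t)⁻¹ • N t) x = (w x)⁻¹ • (deriv (deriv N) x -
      (2 * deriv w x) • deriv (fun t => (w t)⁻¹ • N t) x - deriv (deriv w) x • (w x)⁻¹ • N x) := by
  have hw1 : Differentiable ℝ w := hw.differentiable two_ne_zero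
  have hN1 : Differentiable ℝ N := hN.differentiable two_ne_zero
  have hw2 : Differentiable ℝ (deriv w) := (hw.deriv' (n := 1)).differentiable one_ne_zero
  have hN2 : Differentiable ℝ (deriv N) := (hN.deriv' (n := 1)).differentiable one_ne_zero
  have hP : ∀ t, w t ≠ 0 → HasDerivAt (fun t => (w t)⁻¹ • N t)
      ((w t)⁻¹ • (deriv N t - deriv w t • (w t)⁻¹ • N t)) t := fun t ht =>
    hasDerivAt_inv_smul (hw1 t).hasDerivAt (hN1 t).hasDerivAt ht
  have hP' : deriv (fun t => (w t)⁻¹ • N t) =ᶠ[nhds x]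
      fun t => (w t)⁻¹ • (deriv N t - deriv w t • (w t)⁻¹ • N t) := by
    filter_upwards [hw1.continuous.continuousAt.eventually_ne hx] with t ht
    exact (hP t ht).deriv
  rw [hP'.deriv_eq, (hP x hx).deriv]
  have hG := (hN2 x).hasDerivAt.fun_sub ((hw2 x).hasDerivAt.fun_smul (hP x hx))
  rw [(hasDerivAt_inv_smul (hw1 x).hasDerivAt hG hx).deriv]
  module

end Quotient

theorem constrained_contact_at_one_general (n : ℕ) (hn : 2 ≤ n) (d : ℕ)
    (p : ℕ → EuclideanSpace ℝ (Fin d)) (ω : ℕ → ℝ)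
    (hωn : ω n = 1)
    (P : ℝ → EuclideanSpace ℝ (Fin d))
    (hP : ∀ t, P t = (∑ i ∈ Finset.range (n + 1), ω i * bern n i t)⁻¹ •
        ∑ i ∈ Finset.range (n + 1), (ω i * bern n i t) • p i)
    (m : ℕ) (hm : 2 ≤ m)
    (q : ℕ → EuclideanSpace ℝ (Fin d))
    (Q : ℝ → EuclideanSpace ℝ (Fin d))
    (hQ : ∀ t, Q t = ∑ i ∈ Finset.range (m + 1), bern m i t • q i)
    (hqm : q m = p n)
    (hqm1 : q (m - 1) = (1 - (n : ℝ) / m * ω (n - 1)) • p n +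
        ((n : ℝ) / m * ω (n - 1)) • p (n - 1))
    (hqm2 : q (m - 2) = (1 / ((m : ℝ) * ((m : ℝ) - 1))) •
        ((2 * (n : ℝ) * ω (n - 1) * ((n : ℝ) * ω (n - 1) - (m : ℝ)) +
            (n : ℝ) * ω (n - 2) * (1 - (n : ℝ)) + (m : ℝ) * ((m : ℝ) - 1)) • p n +
          (2 * (n : ℝ) * ω (n - 1) * ((m : ℝ) - (n : ℝ) * ω (n - 1))) • p (n - 1) +
          ((n : ℝ) * ((n : ℝ) - 1) * ω (n - 2)) • p (n - 2))) :
    Q 1 = P 1 ∧ deriv Q 1 = deriv P 1 ∧ deriv (deriv Q) 1 = deriv (deriv P) 1 := by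
  obtain rfl : P = fun t => (bezier n ω t)⁻¹ • bezier n (fun i => ω i • p i) t := by
    funext t
    simp only [hP, bezier, smul_eq_mul, mul_comm, smul_smul]
  obtain rfl : Q = bezier m q := funext hQ
  have hw1 : bezier n ω 1 ≠ 0 := by simp [bezier_one, hωn]
  have hw := contDiff_bezier (k := 2) n ω
  have hN := contDiff_bezier (k := 2) n fun i => ω i • p i
  have hm2 : (2 : ℝ) ≤ m := by exact_mod_cast hm
  have hm0 : (m : ℝ) ≠ 0 := by linarith
  have hm1 : (m : ℝ) - 1 ≠ 0 := by linarith
  rw [deriv_deriv_inv_smul hw hN hw1, deriv_inv_smul (hw.differentiable two_ne_zero 1)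
    (hN.differentiable two_ne_zero 1) hw1]
  simp only [bezier_one, deriv_bezier_one (by omega : 1 ≤ n), deriv_bezier_one (by omega : 1 ≤ m),
    deriv_deriv_bezier_one hn, deriv_deriv_bezier_one hm, hωn, hqm, hqm1, hqm2, smul_eq_mul]
  refine ⟨by simp, ?_, ?_⟩
  · match_scalars
    · field_simp
      ring
    · field_simp
  · match_scalars <;> field_simp <;> ring

theorem constrained_contact_at_one (n : ℕ) (hn : 2 ≤ n) (d : ℕ)
    (p : ℕ → EuclideanSpace ℝ (Fin d)) (ω : ℕ → ℝ)
    (hω : ∀ i ≤ n, 0 < ω i) (hω0 : ω 0 = 1) (hωn : ω n = 1)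
    (P : ℝ → EuclideanSpace ℝ (Fin d))
    (hP : ∀ t, P t = (∑ i ∈ Finset.range (n + 1), ω i * bern n i t)⁻¹ •
        ∑ i ∈ Finset.range (n + 1), (ω i * bern n i t) • p i)
    (m : ℕ) (hm : 2 ≤ m)
    (q : ℕ → EuclideanSpace ℝ (Fin d))
    (Q : ℝ → EuclideanSpace ℝ (Fin d))
    (hQ : ∀ t, Q t = ∑ i ∈ Finset.range (m + 1), bern m i t • q i)
    (hqm : q m = p n)
    (hqm1 : q (m - 1) = (1 - (n : ℝ) / m * ω (n - 1)) • p n +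
        ((n : ℝ) / m * ω (n - 1)) • p (n - 1))
    (hqm2 : q (m - 2) = (1 / ((m : ℝ) * ((m : ℝ) - 1))) •
        ((2 * (n : ℝ) * ω (n - 1) * ((n : ℝ) * ω (n - 1) - (m : ℝ)) +
            (n : ℝ) * ω (n - 2) * (1 - (n : ℝ)) + (m : ℝ) * ((m : ℝ) - 1)) • p n +
          (2 * (n : ℝ) * ω (n - 1) * ((m : ℝ) - (n : ℝ) * ω (n - 1))) • p (n - 1) +
          ((n : ℝ) * ((n : ℝ) - 1) * ω (n - 2)) • p (n - 2))) :
    Q 1 = P 1 ∧ deriv Q 1 = deriv P 1 ∧ deriv (deriv Q) 1 = deriv (deriv P) 1 :=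
  constrained_contact_at_one_general n hn d p ω hωn P hP m hm q Q hQ hqm hqm1 hqm2
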